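/- In the biSST-to-HDT0L reduction, for every accepting run r : q0 →^{t1} q1 →^{t2} ⋯ →^{tn} q of the biSST T on input u, and both i = 1,2, the morphism composition satisfies f_{q0}(f_{t1}(… f_{tn}(f_q^i(#)…))) = π_i(T(u)), the i-th component of the output of T on u. -/

import Mathlib

namespace SSTPaper

/-- Homomorphic extension of a substitution, fixing output letters. -/
def ext {X Γ : Type} (σ : X → List (Γ ⊕ X)) : List (Γ ⊕ X) → List (Γ ⊕ X) :=
  fun w => w.flatMap (Sum.elim (fun g => [Sum.inl g]) σ)

/-- Composition of substitutions: (σ1 σ2)(x) = σ̂1(σ2 x). -/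
def comp {X Γ : Type} (σ1 σ2 : X → List (Γ ⊕ X)) : X → List (Γ ⊕ X) :=
  fun x => ext σ1 (σ2 x)

/-- The identity substitution. -/
def idSubst {X Γ : Type} : X → List (Γ ⊕ X) := fun x => [Sum.inr x]

end SSTPaper

namespace SSTPaper

/-- Erase variables and keep output letters, after applying σ to a variable word:
    this computes σ_ε σ (xs). -/
def evalOut {X Γ : Type} (σ : X → List (Γ ⊕ X)) (xs : List X) : List Γ :=
  (xs.flatMap σ).filterMap (Sum.elim some (fun _ => none))

/-- Nondeterministic streaming string transducer. -/
structure NSST (S Γ Q X : Type) where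
  init : Q
  final : Q → Prop
  delta : Q → S → Q → Prop
  rho : Q → S → Q → X → List (Γ ⊕ X)
  out : Q → List X

/-- Nondeterministic biSST: like an SST but outputs a pair of variable words. -/
structure BiSST (S Γ Q X : Type) where
  init : Q
  final : Q → Prop
  delta : Q → S → Q → Prop
  rho : Q → S → Q → X → List (Γ ⊕ X)
  out : Q → List X × List X

/-- Runs of an SST, together with the induced substitution
    σ_r = ρ(t₁) ρ(t₂) ⋯ ρ(t_n) (left-to-right composition). -/
inductive Run {S Γ Q X : Type} (T : NSST S Γ Q X) :
    Q → List S → Q → (X → List (Γ ⊕ X)) → Prop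
  | nil (q : Q) : Run T q [] q idSubst
  | cons {q q' q'' : Q} {a : S} {w : List S} {σ : X → List (Γ ⊕ X)} :
      T.delta q a q' → Run T q' w q'' σ →
      Run T q (a :: w) q'' (comp (T.rho q a q') σ)

/-- Runs of a biSST, with induced substitution. -/
inductive BiRun {S Γ Q X : Type} (T : BiSST S Γ Q X) :
    Q → List S → Q → (X → List (Γ ⊕ X)) → Prop
  | nil (q : Q) : BiRun T q [] q idSubst
  | cons {q q' q'' : Q} {a : S} {w : List S} {σ : X → List (Γ ⊕ X)} :
      T.delta q a q' → BiRun T q' w q'' σ →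
      BiRun T q (a :: w) q'' (comp (T.rho q a q') σ)

/-- The relation ⟦T⟧ ⊆ Σ* × Γ* defined by a nondeterministic SST. -/
def NSST.Rel {S Γ Q X : Type} (T : NSST S Γ Q X) (w : List S) (o : List Γ) : Prop :=
  ∃ q σ, Run T T.init w q σ ∧ T.final q ∧ o = evalOut σ (T.out q)

/-- The relation defined by a biSST (input, pair of outputs). -/
def BiSST.Rel {S Γ Q X : Type} (T : BiSST S Γ Q X) (w : List S)
    (o : List Γ × List Γ) : Prop :=
  ∃ q σ, BiRun T T.init w q σ ∧ T.final q ∧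
    o.1 = evalOut σ (T.out q).1 ∧ o.2 = evalOut σ (T.out q).2

/-- Domain of an SST. -/
def NSST.Dom {S Γ Q X : Type} (T : NSST S Γ Q X) : Set (List S) :=
  {w | ∃ o, T.Rel w o}

/-- Domain of a biSST. -/
def BiSST.Dom {S Γ Q X : Type} (T : BiSST S Γ Q X) : Set (List S) :=
  {w | ∃ o, T.Rel w o}

/-- A biSST is diagonal if every output pair has equal components. -/
def BiSST.Diagonal {S Γ Q X : Type} (T : BiSST S Γ Q X) : Prop :=
  ∀ w o₁ o₂, T.Rel w (o₁, o₂) → o₁ = o₂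

/-- A nondeterministic SST is functional if it defines a partial function. -/
def NSST.Functional {S Γ Q X : Type} (T : NSST S Γ Q X) : Prop :=
  ∀ w o₁ o₂, T.Rel w o₁ → T.Rel w o₂ → o₁ = o₂

/-- Determinism of a transition relation. -/
def DetRel {Q S : Type} (δ : Q → S → Q → Prop) : Prop :=
  ∀ q a q₁ q₂, δ q a q₁ → δ q a q₂ → q₁ = q₂

/-- Rename variables inside a word over Γ ∪ X. -/
def mapV {Γ X X' : Type} (f : X → X') : List (Γ ⊕ X) → List (Γ ⊕ X') :=
  List.map (Sum.map id f)

/-- Synchronized product of two nondeterministic SSTs, as a biSST. -/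
def prodSST {S Γ Q₁ Q₂ X₁ X₂ : Type} (T₁ : NSST S Γ Q₁ X₁) (T₂ : NSST S Γ Q₂ X₂) :
    BiSST S Γ (Q₁ × Q₂) (X₁ ⊕ X₂) where
  init := (T₁.init, T₂.init)
  final := fun p => T₁.final p.1 ∧ T₂.final p.2
  delta := fun p a p' => T₁.delta p.1 a p'.1 ∧ T₂.delta p.2 a p'.2
  rho := fun p a p' =>
    Sum.elim (fun x₁ => mapV Sum.inl (T₁.rho p.1 a p'.1 x₁))
             (fun x₂ => mapV Sum.inr (T₂.rho p.2 a p'.2 x₂))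
  out := fun p => ((T₁.out p.1).map Sum.inl, (T₂.out p.2).map Sum.inr)

end SSTPaper

namespace SSTPaper

/-- Apply a monoid morphism (given by its action on letters) to a word. -/
def mapply {A B : Type} (f : A → List B) (w : List A) : List B := w.flatMap f

/-- Value h(h_{i₁}( … h_{i_k}(v) … )) of an HDT0L instance on an index sequence. -/
def hdtVal {A B : Type} {n : ℕ} (hs : Fin n → A → List A) (h : A → List B)
    (l : List (Fin n)) (v : List A) : List B :=
  mapply h (l.foldr (fun i w => mapply (hs i) w) v)

/-- Validity of an HDT0L instance. -/
def HDT0LValid {A B : Type} {n : ℕ} (hs gs : Fin n → A → List A)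
    (h g : A → List B) (v w : List A) : Prop :=
  ∀ l : List (Fin n), hdtVal hs h l v = hdtVal gs g l w

end SSTPaper

namespace SSTPaper

/-- Runs of a biSST recording the list of transitions used. -/
inductive BiRunL {S Γ Q X : Type} (T : BiSST S Γ Q X) :
    Q → List S → Q → List (Q × S × Q) → Prop
  | nil (q : Q) : BiRunL T q [] q []
  | cons {q q' q'' : Q} {a : S} {w : List S} {ts : List (Q × S × Q)} :
      T.delta q a q' → BiRunL T q' w q'' ts →
      BiRunL T q (a :: w) q'' ((q, a, q') :: ts)

/-- The substitution induced by a list of transitions of a biSST: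
    σ = ρ(t₁) ρ(t₂) ⋯ ρ(t_n). -/
def bsubstOf {S Γ Q X : Type} (T : BiSST S Γ Q X) (ts : List (Q × S × Q)) :
    X → List (Γ ⊕ X) :=
  ts.foldr (fun t σ => comp (T.rho t.1 t.2.1 t.2.2) σ) idSubst

end SSTPaper

namespace SSTPaper

/-- Base letters X ∪ Γ ∪ {$, #} of the HDT0L alphabet built from a biSST:
    `Sum.inr (Sum.inr false)` is $ and `Sum.inr (Sum.inr true)` is #. -/
abbrev BaseL (X Γ : Type) := X ⊕ Γ ⊕ Bool

/-- The HDT0L alphabet A = {α_q : α ∈ X ∪ Γ ∪ {$,#}, q ∈ Q} ∪ {#};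
    `Sum.inr ()` is the unsubscripted letter #. -/
abbrev ALet (X Γ Q : Type) := (BaseL X Γ × Q) ⊕ Unit

/-- The morphism subscript_q. -/
def subscr {X Γ Q : Type} (q : Q) (α : BaseL X Γ) : ALet X Γ Q := Sum.inl (α, q)

/-- The morphism f_q^i for a final state q; `i = true` selects the first
    component π₁(F(q)) and `i = false` the second. It sends # to
    subscript_q($ · π_i(F(q))) and everything else to ε. -/
def fFin {S Γ Q X : Type} (T : BiSST S Γ Q X) (q : Q) (i : Bool) :
    ALet X Γ Q → List (ALet X Γ Q) :=
  fun α => match α with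
    | Sum.inr _ =>
        subscr q (Sum.inr (Sum.inr false)) ::
          (cond i (T.out q).1 (T.out q).2).map (fun x => subscr q (Sum.inl x))
    | _ => []

/-- The morphism f_t for a transition t = (q, a, q'). -/
def fTr {S Γ Q X : Type} [DecidableEq Q] (T : BiSST S Γ Q X) (t : Q × S × Q) :
    ALet X Γ Q → List (ALet X Γ Q) :=
  fun α => match α with
    | Sum.inl (Sum.inl x, p) =>
        if p = t.2.2 then
          (T.rho t.1 t.2.1 t.2.2 x).map
            (fun l => subscr t.1 (Sum.elim (fun g => Sum.inr (Sum.inl g)) Sum.inl l))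
        else []
    | Sum.inl (Sum.inr (Sum.inl g), p) =>
        if p = t.2.2 then [subscr t.1 (Sum.inr (Sum.inl g))] else []
    | Sum.inl (Sum.inr (Sum.inr false), p) =>
        if p = t.2.2 then [subscr t.1 (Sum.inr (Sum.inr false))] else []
    | _ => []

/-- The final morphism f_{q₀} : A* → B* = Γ*. -/
def fOut {S Γ Q X : Type} [DecidableEq Q] (T : BiSST S Γ Q X) :
    ALet X Γ Q → List Γ :=
  fun α => match α with
    | Sum.inl (Sum.inr (Sum.inl g), p) => if p = T.init then [g] else []
    | _ => []

end SSTPaper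

/-!
The letter `$_p` records the state `p` reached so far, and every other letter carries the same
subscript. Reading the run backwards, `f_t` for `t = (p, a, p')` turns `$_{p'}` followed by the
`p'`-subscripted encoding of a word `w` over `Γ ∪ X` into `$_p` followed by the `p`-subscripted
encoding of `ρ(t)(w)`. Hence after all of `f_{t_n}, …, f_{t_1}` the word `$ · π_i(F(q))` has become
the `q₀`-subscripted encoding of `σ_r(π_i(F(q)))`, and `f_{q₀}` keeps exactly its letters from `Γ`.
-/

namespace SSTPaper

section Substitution

variable {Γ X : Type}

theorem ext_idSubst (w : List (Γ ⊕ X)) : ext (idSubst (Γ := Γ)) w = w := by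
  have : Sum.elim (fun g => [Sum.inl g]) (idSubst (Γ := Γ)) = fun l : Γ ⊕ X => [l] := by
    funext l; cases l <;> rfl
  simp only [ext, this, List.flatMap_singleton']

theorem ext_ext (σ₁ σ₂ : X → List (Γ ⊕ X)) (w : List (Γ ⊕ X)) :
    ext σ₁ (ext σ₂ w) = ext (comp σ₁ σ₂) w := by
  simp only [ext, List.flatMap_assoc]
  congr 1
  funext l
  cases l <;> simp [comp, ext]

theorem ext_map_inr (σ : X → List (Γ ⊕ X)) (xs : List X) :
    ext σ (xs.map Sum.inr) = xs.flatMap σ := by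
  simp [ext, List.flatMap_map]

end Substitution

def encode {Γ X Q : Type} (p : Q) (w : List (Γ ⊕ X)) : List (ALet X Γ Q) :=
  w.map fun l => subscr p (Sum.elim (fun g => Sum.inr (Sum.inl g)) Sum.inl l)

theorem fFin_hash {S Γ Q X : Type} (T : BiSST S Γ Q X) (q : Q) (i : Bool) :
    fFin T q i (Sum.inr ()) =
      subscr q (Sum.inr (Sum.inr false)) ::
        encode q ((cond i (T.out q).1 (T.out q).2).map Sum.inr) := by
  simp [fFin, encode]

section Morphisms

variable {S Γ Q X : Type} [DecidableEq Q] (T : BiSST S Γ Q X)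

theorem mapply_fTr_dollar_encode (t : Q × S × Q) (w : List (Γ ⊕ X)) :
    mapply (fTr T t) (subscr t.2.2 (Sum.inr (Sum.inr false)) :: encode t.2.2 w) =
      subscr t.1 (Sum.inr (Sum.inr false)) :: encode t.1 (ext (T.rho t.1 t.2.1 t.2.2) w) := by
  induction w with
  | nil => simp [mapply, encode, ext, fTr, subscr]
  | cons l w ih =>
    cases l <;> simp_all [mapply, encode, ext, fTr, subscr]

theorem BiRunL.foldr_fTr_dollar_encode {p q : Q} {u : List S} {ts : List (Q × S × Q)}
    (hrun : BiRunL T p u q ts) (w : List (Γ ⊕ X)) :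
    ts.foldr (fun t w => mapply (fTr T t) w)
        (subscr q (Sum.inr (Sum.inr false)) :: encode q w) =
      subscr p (Sum.inr (Sum.inr false)) :: encode p (ext (bsubstOf T ts) w) := by
  induction hrun with
  | nil q => simp [bsubstOf, ext_idSubst]
  | @cons p p' q a u ts _ _ ih =>
    rw [List.foldr_cons, ih, mapply_fTr_dollar_encode T (p, a, p'), ext_ext]
    rfl

theorem mapply_fOut_dollar_encode (w : List (Γ ⊕ X)) :
    mapply (fOut T) (subscr T.init (Sum.inr (Sum.inr false)) :: encode T.init w) =
      w.filterMap (Sum.elim some fun _ => none) := by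
  induction w with
  | nil => rfl
  | cons l w ih => cases l <;> simp_all [mapply, encode, fOut, subscr, List.filterMap_cons]

end Morphisms

/-- For every accepting run of the biSST T on input u, with transitions
    t₁, …, t_n ending in the final state q, and each i ∈ {1,2} (here `true`
    selects the first component), f_{q₀}(f_{t₁}(… f_{t_n}(f_q^i(#)) …))
    equals π_i(T(u)). -/
theorem reduction_run_output {S Γ Q X : Type} [DecidableEq Q]
    (T : BiSST S Γ Q X) :
    ∀ (u : List S) (ts : List (Q × S × Q)) (q : Q),
      BiRunL T T.init u q ts → T.final q → ∀ i : Bool,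
      mapply (fOut T)
          (ts.foldr (fun t w => mapply (fTr T t) w) (fFin T q i (Sum.inr ()))) =
        evalOut (bsubstOf T ts) (cond i (T.out q).1 (T.out q).2) := by
  intro u ts q hrun _ i
  rw [fFin_hash, hrun.foldr_fTr_dollar_encode, mapply_fOut_dollar_encode, ext_map_inr]
  rfl

end SSTPaper
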